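/- Suppose u₁, u₂ ∈ ℍ and purely imaginary unit quaternions q₁, q₂ satisfy |u₁| = |u₂|, Re(u₁) = Re(u₂), and ⟨Im u₁, q₁⟩ = ⟨Im u₂, q₂⟩. Then there exists an algebra automorphism g of ℍ with g(u₁) = u₂ and g(q₁) = q₂. -/

import Mathlib

/-!
An orthonormal pair `p, e` of imaginary unit quaternions satisfies the relations of `i, j`, so
`i ↦ p, j ↦ e` is an automorphism of `ℍ`; hence automorphisms act transitively on such frames.
Given `u` and `q`, choose the frame `(q, e)` with `Im u = c q + s e`, where `c = ⟪Im u, q⟫` and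
`s² = ‖u‖² - (Re u)² - c²`. The frames attached to `(u₁, q₁)` and `(u₂, q₂)` give the same
coordinates `(Re u, c, s)`, so the automorphism carrying one frame to the other maps `u₁` to `u₂`.
-/

open Quaternion

section

variable {E : Type*} [NormedAddCommGroup E] [InnerProductSpace ℝ E] {q : E}

theorem inner_sub_inner_smul_self (hq : ‖q‖ = 1) (v : E) :
    inner ℝ q (v - inner ℝ v q • q) = 0 := by
  rw [inner_sub_right, real_inner_smul_right, real_inner_self_eq_norm_sq, hq, real_inner_comm]
  ring

theorem norm_sub_inner_smul_self_sq (hq : ‖q‖ = 1) (v : E) :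
    ‖v - inner ℝ v q • q‖ ^ 2 = ‖v‖ ^ 2 - inner ℝ v q ^ 2 := by
  rw [norm_sub_sq_real, real_inner_smul_right, norm_smul, hq, Real.norm_eq_abs]
  nlinarith [sq_abs (inner ℝ v q)]

end

namespace Quaternion

open QuaternionAlgebra (Basis)

theorem norm_sq_eq_re_sq_add_norm_im_sq (a : ℍ) : ‖a‖ ^ 2 = a.re ^ 2 + ‖a.im‖ ^ 2 := by
  have h : inner ℝ (a.re : ℍ) a.im = 0 := by simp [inner_def]
  have hpyth := norm_add_sq_real (a.re : ℍ) a.im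
  rwa [h, mul_zero, add_zero, re_add_im, norm_coe, Real.norm_eq_abs, sq_abs] at hpyth

theorem mul_self_eq_neg_one_of_re_eq_zero {a : ℍ} (ha : a.re = 0) (hn : ‖a‖ = 1) :
    a * a = -1 := by
  rw [← sq, sq_eq_neg_normSq.2 ha, normSq_eq_norm_mul_self, hn]; simp

theorem mul_comm_eq_neg_of_inner_eq_zero {a b : ℍ} (ha : a.re = 0) (hb : b.re = 0)
    (hab : inner ℝ a b = 0) : b * a = -(a * b) := by
  rw [inner_def] at hab
  ext <;> simp [ha, hb] at hab ⊢ <;> linarith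

noncomputable def basisOfOrthonormal {p e : ℍ} (hp : p.re = 0) (he : e.re = 0) (hpn : ‖p‖ = 1)
    (hen : ‖e‖ = 1) (hpe : inner ℝ p e = 0) : Basis ℍ (-1 : ℝ) 0 (-1 : ℝ) where
  i := p
  j := e
  k := p * e
  i_mul_i := by simp [mul_self_eq_neg_one_of_re_eq_zero hp hpn]
  j_mul_j := by simp [mul_self_eq_neg_one_of_re_eq_zero he hen]
  i_mul_j := rfl
  j_mul_i := by simp [mul_comm_eq_neg_of_inner_eq_zero hp he hpe]

noncomputable def algEquivOfBasis (B : Basis ℍ (-1 : ℝ) 0 (-1 : ℝ)) : ℍ ≃ₐ[ℝ] ℍ :=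
  let f : ℍ →ₐ[ℝ] ℍ := B.liftHom
  AlgEquiv.ofBijective f ⟨f.toRingHom.injective,
    (LinearMap.injective_iff_surjective (f := f.toLinearMap)).1 f.toRingHom.injective⟩

-- `Basis.self ℝ` restated over `ℍ` instead of the defeq but syntactically distinct `ℍ[ℝ,-1,0,-1]`.
abbrev stdBasis : Basis ℍ (-1 : ℝ) 0 (-1 : ℝ) := Basis.self ℝ

theorem algEquivOfBasis_stdBasis_i (B : Basis ℍ (-1 : ℝ) 0 (-1 : ℝ)) :
    algEquivOfBasis B stdBasis.i = B.i := by
  change B.lift _ = _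
  simp [Basis.lift]

theorem algEquivOfBasis_stdBasis_j (B : Basis ℍ (-1 : ℝ) 0 (-1 : ℝ)) :
    algEquivOfBasis B stdBasis.j = B.j := by
  change B.lift _ = _
  simp [Basis.lift]

theorem exists_algEquiv_apply_i_apply_j (B₁ B₂ : Basis ℍ (-1 : ℝ) 0 (-1 : ℝ)) :
    ∃ g : ℍ ≃ₐ[ℝ] ℍ, g B₁.i = B₂.i ∧ g B₁.j = B₂.j := by
  refine ⟨(algEquivOfBasis B₁).symm.trans (algEquivOfBasis B₂), ?_, ?_⟩
  · rw [AlgEquiv.trans_apply, ← algEquivOfBasis_stdBasis_i B₁, AlgEquiv.symm_apply_apply,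
      algEquivOfBasis_stdBasis_i]
  · rw [AlgEquiv.trans_apply, ← algEquivOfBasis_stdBasis_j B₁, AlgEquiv.symm_apply_apply,
      algEquivOfBasis_stdBasis_j]

theorem exists_re_eq_zero_norm_eq_one_inner_eq_zero (q : ℍ) :
    ∃ e : ℍ, e.re = 0 ∧ ‖e‖ = 1 ∧ inner ℝ q e = 0 := by
  let f : ℍ →ₗ[ℝ] ℝ × ℝ := (QuaternionAlgebra.reₗ _ _ _).prod (innerₗ ℍ q)
  have : LinearMap.ker f ≠ ⊥ := LinearMap.ker_ne_bot_of_finrank_lt (by simp [finrank_eq_four])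
  obtain ⟨x, hx, hx0⟩ := Submodule.exists_mem_ne_zero_of_ne_bot this
  obtain ⟨hre, hinner⟩ : x.re = 0 ∧ inner ℝ q x = 0 := Prod.mk_eq_zero.1 hx
  exact ⟨‖x‖⁻¹ • x, by simp [hre], norm_smul_inv_norm hx0, by simp [inner_smul_right, hinner]⟩

theorem exists_eq_inner_smul_add_norm_smul {v q : ℍ} (hv : v.re = 0) (hq : q.re = 0)
    (hqn : ‖q‖ = 1) : ∃ e : ℍ, e.re = 0 ∧ ‖e‖ = 1 ∧ inner ℝ q e = 0 ∧
      v = inner ℝ v q • q + ‖v - inner ℝ v q • q‖ • e := by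
  set w := v - inner ℝ v q • q with hw
  rcases eq_or_ne w 0 with hw0 | hw0
  · obtain ⟨e, he, hen, hqe⟩ := exists_re_eq_zero_norm_eq_one_inner_eq_zero q
    refine ⟨e, he, hen, hqe, ?_⟩
    rw [hw0, norm_zero, zero_smul, add_zero, ← sub_eq_zero, ← hw, hw0]
  · refine ⟨‖w‖⁻¹ • w, by simp [hw, hv, hq], norm_smul_inv_norm hw0, ?_, ?_⟩
    · rw [inner_smul_right, inner_sub_inner_smul_self hqn, mul_zero]
    · rw [smul_inv_smul₀ (norm_ne_zero_iff.2 hw0), hw, add_sub_cancel]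

theorem exists_basis_i_eq {q : ℍ} (hq : q.re = 0) (hqn : ‖q‖ = 1) (u : ℍ) :
    ∃ B : Basis ℍ (-1 : ℝ) 0 (-1 : ℝ), B.i = q ∧
      u = u.re + inner ℝ u.im q • B.i + √(‖u‖ ^ 2 - u.re ^ 2 - inner ℝ u.im q ^ 2) • B.j := by
  obtain ⟨e, he, hen, hqe, hu⟩ := exists_eq_inner_smul_add_norm_smul (re_im u) hq hqn
  refine ⟨basisOfOrthonormal hq he hqn hen hqe, rfl, ?_⟩
  rw [norm_sq_eq_re_sq_add_norm_im_sq, add_sub_cancel_left, ← norm_sub_inner_smul_self_sq hqn,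
    Real.sqrt_sq (norm_nonneg _), add_assoc]
  exact (re_add_im u).symm.trans (congrArg _ hu)

end Quaternion

theorem stmt_14 (u₁ u₂ q₁ q₂ : ℍ)
    (hq₁ : q₁.re = 0) (hq₂ : q₂.re = 0) (hq₁n : ‖q₁‖ = 1) (hq₂n : ‖q₂‖ = 1)
    (hn : ‖u₁‖ = ‖u₂‖) (hre : u₁.re = u₂.re)
    (hinner : (inner ℝ u₁.im q₁ : ℝ) = inner ℝ u₂.im q₂) :
    ∃ g : ℍ ≃ₐ[ℝ] ℍ, g u₁ = u₂ ∧ g q₁ = q₂ := by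
  obtain ⟨B₁, rfl, hu₁⟩ := exists_basis_i_eq hq₁ hq₁n u₁
  obtain ⟨B₂, rfl, hu₂⟩ := exists_basis_i_eq hq₂ hq₂n u₂
  obtain ⟨g, hgi, hgj⟩ := exists_algEquiv_apply_i_apply_j B₁ B₂
  refine ⟨g, ?_, hgi⟩
  rw [hu₁, map_add, map_add, ← algebraMap_def, AlgEquiv.commutes, algebraMap_def, map_smul,
    map_smul, hgi, hgj, hn, hre, hinner, ← hu₂]
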